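/- Let G be a connected simple graph of order n with rvd(G) = 2 and such that the complement Ḡ is connected. Then rvd(Ḡ) ≥ n−3. -/

import Mathlib

open SimpleGraph

/-- The graph obtained from `G` by removing (isolating) the vertices of `S`.
Since in our uses the endpoints of interest never lie in `S`, reachability
between them in this graph agrees with reachability in `G - S`. -/
def SimpleGraph.delVerts {V : Type*} (G : SimpleGraph V) (S : Set V) : SimpleGraph V where
  Adj u v := G.Adj u v ∧ u ∉ S ∧ v ∉ S
  symm := ⟨fun u v h => ⟨h.1.symm, h.2.2, h.2.1⟩⟩
  loopless := ⟨fun v h => G.loopless.irrefl v h.1⟩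

/-- `c` is a rainbow vertex-disconnection coloring of `G`: every two distinct
vertices `x, y` admit an `x`-`y` rainbow vertex-cut. -/
def SimpleGraph.IsRVDColoring {V α : Type*} (G : SimpleGraph V) (c : V → α) : Prop :=
  ∀ x y : V, x ≠ y → ∃ S : Set V, x ∉ S ∧ y ∉ S ∧
    (¬ G.Adj x y → ¬ (G.delVerts S).Reachable x y ∧ Set.InjOn c S) ∧
    (G.Adj x y → ¬ ((G.deleteEdges {s(x, y)}).delVerts S).Reachable x y ∧
      (Set.InjOn c (S ∪ {x}) ∨ Set.InjOn c (S ∪ {y})))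

/-- The rainbow vertex-disconnection number of `G`: the minimum number of colors
in a rainbow vertex-disconnection coloring of `G`. -/
noncomputable def SimpleGraph.rvd {V : Type*} (G : SimpleGraph V) : ℕ :=
  sInf {k | ∃ c : V → Fin k, G.IsRVDColoring c}

/-!
A rainbow vertex-disconnection colouring with two colours separates the ends of every edge `xy`
in `G - xy` by at most one vertex and every other pair by at most two, so no two vertices are
joined by three internally disjoint paths of which at most one is an edge.

Pick `r` such that every other vertex has degree at least two (two vertices of degree at most one
already give one of the configurations below) and shrink `V` to a minimal set `U` which, for some
`r ∈ U`, induces a connected graph, has a vertex other than `r`, and contains all neighbours of its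
vertices other than `r`. If `c` were a cut vertex of `G[U]`, the part of `G[U] - c` away from `r`
together with `c` would be smaller; so an edge at `r` lies on a cycle `C` of `G[U]`, and a further
neighbour of a vertex `x ≠ r` of `C` would give a chord or an ear of `C`, hence three paths as
above. Thus the vertices of `C` after `r` have degree two in `G`, and the first few of them give
* two non-adjacent vertices with at most two other neighbours (`HasSparseNonEdge`), or
* an edge `xy` with `N(x) ⊆ {y, a}`, `N(y) ⊆ {x, b}` and `a = b` or `ab ∉ E(G)` (`HasSparseEdge`).
In `Ḡ` every vertex outside `{x, y} ∪ N(x) ∪ N(y)` is a common neighbour of `x` and `y`. Hence a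
rainbow `x`–`y` vertex-cut of `Ḡ` leaves out at most four vertices if `xy ∈ E(Ḡ)`, where it has
fewer than `rvd(Ḡ)` vertices, and at most three otherwise (`a = b`, or the path `x b a y` forces
`a` or `b` into the cut); either way `n ≤ rvd(Ḡ) + 3`.
-/

theorem Set.InjOn.ncard_le_of_fin {V : Type*} {S : Set V} {k : ℕ} {c : V → Fin k}
    (hc : Set.InjOn c S) : S.ncard ≤ k := by
  simpa using Set.ncard_le_ncard_of_injOn c (fun _ _ => Set.mem_univ _) hc

theorem Fintype.card_le_ncard_add_ncard {V : Type*} [Fintype V] {S T : Set V}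
    (h : ∀ w ∉ S, w ∈ T) : Fintype.card V ≤ S.ncard + T.ncard :=
  calc Fintype.card V = (Set.univ : Set V).ncard := by simp
    _ ≤ (S ∪ T).ncard := Set.ncard_le_ncard fun w _ => (em (w ∈ S)).imp id (h w)
    _ ≤ S.ncard + T.ncard := Set.ncard_union_le S T

namespace SimpleGraph

variable {V : Type*} {G : SimpleGraph V} {S : Set V} {u v w x y : V}

@[simp] lemma delVerts_adj : (G.delVerts S).Adj u v ↔ G.Adj u v ∧ u ∉ S ∧ v ∉ S := Iff.rfl

lemma Walk.reachable_delVerts (p : G.Walk u v) (hp : ∀ t ∈ p.support, t ∉ S) :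
    (G.delVerts S).Reachable u v := by
  induction p with
  | nil => rfl
  | cons h p ih =>
    simp only [support_cons, List.mem_cons, forall_eq_or_imp] at hp
    have hadj : (G.delVerts S).Adj _ _ := ⟨h, hp.1, hp.2 _ p.start_mem_support⟩
    exact hadj.reachable.trans (ih hp.2)

lemma Walk.exists_mem_support_mem_of_not_reachable (p : G.Walk u v)
    (hS : ¬ (G.delVerts S).Reachable u v) : ∃ t ∈ p.support, t ∈ S := by
  by_contra! h
  exact hS (p.reachable_delVerts h)

lemma not_reachable_delVerts_compl_pair (hxy : x ≠ y) (h : ¬ G.Adj x y) :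
    ¬ (G.delVerts {x, y}ᶜ).Reachable x y := by
  rintro ⟨_ | ⟨⟨hadj, -, hb⟩, -⟩⟩
  · exact hxy rfl
  · obtain rfl | rfl : _ = x ∨ _ = y := by simpa [or_iff_not_imp_left] using hb
    exacts [G.loopless.irrefl _ hadj, h hadj]

lemma isRVDColoring_of_injective {α : Type*} {c : V → α} (hc : c.Injective) :
    G.IsRVDColoring c := by
  intro x y hxy
  refine ⟨{x, y}ᶜ, by simp, by simp, fun h => ⟨not_reachable_delVerts_compl_pair hxy h,
    hc.injOn⟩, fun _ => ⟨not_reachable_delVerts_compl_pair hxy (by simp), Or.inl hc.injOn⟩⟩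

lemma exists_isRVDColoring_rvd [Fintype V] (G : SimpleGraph V) :
    ∃ c : V → Fin G.rvd, G.IsRVDColoring c :=
  Nat.sInf_mem (s := {k | ∃ c : V → Fin k, G.IsRVDColoring c})
    ⟨_, _, isRVDColoring_of_injective (Fintype.equivFin V).injective⟩

lemma IsRVDColoring.exists_cut_of_adj [Finite V] {k : ℕ} {c : V → Fin k}
    (hc : G.IsRVDColoring c) (h : G.Adj x y) :
    ∃ S : Set V, x ∉ S ∧ y ∉ S ∧ S.ncard < k ∧
      ¬ ((G.deleteEdges {s(x, y)}).delVerts S).Reachable x y := by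
  obtain ⟨S, hx, hy, -, hS⟩ := hc x y h.ne
  obtain ⟨hsep, hinj⟩ := hS h
  refine ⟨S, hx, hy, ?_, hsep⟩
  have hlt : ∀ z ∉ S, Set.InjOn c (S ∪ {z}) → S.ncard < k := fun z hz hinj => by
    have := hinj.ncard_le_of_fin
    rw [Set.union_singleton, Set.ncard_insert_of_notMem hz] at this
    omega
  rcases hinj with hinj | hinj
  exacts [hlt x hx hinj, hlt y hy hinj]

lemma IsRVDColoring.exists_cut_of_not_adj {k : ℕ} {c : V → Fin k} (hc : G.IsRVDColoring c)
    (hxy : x ≠ y) (h : ¬ G.Adj x y) :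
    ∃ S : Set V, x ∉ S ∧ y ∉ S ∧ S.ncard ≤ k ∧ ¬ (G.delVerts S).Reachable x y := by
  obtain ⟨S, hx, hy, hS, -⟩ := hc x y hxy
  exact ⟨S, hx, hy, (hS h).2.ncard_le_of_fin, (hS h).1⟩

def HasSparseNonEdge (G : SimpleGraph V) : Prop :=
  ∃ x y, x ≠ y ∧ ¬ G.Adj x y ∧ ((G.neighborSet x ∪ G.neighborSet y) \ {x, y}).ncard ≤ 2

def HasSparseEdge (G : SimpleGraph V) : Prop :=
  ∃ x y a b, G.Adj x y ∧ G.neighborSet x ⊆ {y, a} ∧ G.neighborSet y ⊆ {x, b} ∧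
    (a = b ∨ ¬ G.Adj a b)

/-- The path `x w y` of `Gᶜ` avoids `S` and the edge `xy`. -/
lemma adj_or_adj_of_not_reachable_compl
    (hS : ¬ ((Gᶜ.deleteEdges {s(x, y)}).delVerts S).Reachable x y)
    (hx : x ∉ S) (hy : y ∉ S) (hw : w ∉ S) (hwx : w ≠ x) (hwy : w ≠ y) :
    G.Adj x w ∨ G.Adj y w := by
  by_contra! h
  refine hS (Adj.reachable (v := w) ?_ |>.trans (Adj.reachable ?_)) <;>
    simp_all [compl_adj, eq_comm, adj_comm]

lemma HasSparseNonEdge.card_le [Fintype V] (h : G.HasSparseNonEdge) {k : ℕ} {c : V → Fin k}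
    (hc : Gᶜ.IsRVDColoring c) : Fintype.card V ≤ k + 3 := by
  obtain ⟨x, y, hxy, hnadj, hN⟩ := h
  obtain ⟨S, hx, hy, hSk, hS⟩ := hc.exists_cut_of_adj ((compl_adj G x y).2 ⟨hxy, hnadj⟩)
  have hcover : ∀ w ∉ S, w ∈ {x, y} ∪ ((G.neighborSet x ∪ G.neighborSet y) \ {x, y}) := by
    intro w hw
    by_cases hwx : w = x
    · exact Or.inl (Or.inl hwx)
    by_cases hwy : w = y
    · exact Or.inl (Or.inr hwy)
    exact Or.inr ⟨adj_or_adj_of_not_reachable_compl hS hx hy hw hwx hwy, by simp [hwx, hwy]⟩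
  have := Fintype.card_le_ncard_add_ncard hcover
  have := Set.ncard_union_le ({x, y} : Set V) ((G.neighborSet x ∪ G.neighborSet y) \ {x, y})
  have := Set.ncard_pair hxy
  omega

lemma HasSparseEdge.card_le [Fintype V] (h : G.HasSparseEdge) {k : ℕ} {c : V → Fin k}
    (hc : Gᶜ.IsRVDColoring c) : Fintype.card V ≤ k + 3 := by
  obtain ⟨x, y, a, b, hxy, hNx, hNy, hab⟩ := h
  obtain ⟨S, hx, hy, hSk, hS⟩ :=
    hc.exists_cut_of_not_adj hxy.ne fun h => ((compl_adj G x y).1 h).2 hxy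
  have hcover : ∀ w ∉ S, w ≠ x → w ≠ y → w = a ∨ w = b := by
    intro w hw hwx hwy
    have hS' : ¬ ((Gᶜ.deleteEdges {s(x, y)}).delVerts S).Reachable x y :=
      hS ∘ Reachable.mono fun _ _ h => ⟨(deleteEdges_le _) h.1, h.2⟩
    rcases adj_or_adj_of_not_reachable_compl hS' hx hy hw hwx hwy with h | h
    · exact Or.inl ((hNx h).resolve_left hwy)
    · exact Or.inr ((hNy h).resolve_left hwx)
  obtain ⟨z, hz⟩ : ∃ z, ∀ w ∉ S, w ∈ ({x, y, z} : Set V) := by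
    -- otherwise `a` and `b` lie outside `S ∪ {x, y}` and `x b a y` is a path of `Gᶜ - S`
    by_contra! H
    obtain ⟨a', ha'S, ha'⟩ := H b
    obtain ⟨b', hb'S, hb'⟩ := H a
    simp only [Set.mem_insert_iff, Set.mem_singleton_iff, not_or] at ha' hb'
    obtain rfl : a' = a := (hcover a' ha'S ha'.1 ha'.2.1).resolve_right ha'.2.2
    obtain rfl : b' = b := (hcover b' hb'S hb'.1 hb'.2.1).resolve_left hb'.2.2
    have hxb : ¬ G.Adj x b' := fun h => by rcases hNx h with h | h <;> simp_all
    have hay : ¬ G.Adj y a' := fun h => by rcases hNy h with h | h <;> simp_all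
    have hab : ¬ G.Adj b' a' := fun h => by rcases hab with h' | h' <;> simp_all [adj_comm]
    refine hS ((Adj.reachable (v := b') ?_).trans ((Adj.reachable (v := a') ?_).trans
      (Adj.reachable ?_))) <;> simp_all [compl_adj, eq_comm, adj_comm]
  have := Fintype.card_le_ncard_add_ncard hz
  have : ({x, y, z} : Set V).ncard ≤ 3 := (Set.ncard_insert_le _ _).trans (by
    have := Set.ncard_insert_le y {z}; simp at this ⊢; omega)
  omega

def Walk.IsInternallyDisjoint (p q : G.Walk u v) : Prop :=
  ∀ t ∈ p.support, t ∈ q.support → t = u ∨ t = v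

lemma Walk.IsInternallyDisjoint.symm {p q : G.Walk u v} (h : p.IsInternallyDisjoint q) :
    q.IsInternallyDisjoint p :=
  fun t hq hp => h t hp hq

lemma Walk.IsInternallyDisjoint.ne {p q : G.Walk u v} (h : p.IsInternallyDisjoint q) {s t : V}
    (hs : s ∈ p.support) (ht : t ∈ q.support) (hsu : s ≠ u) (hsv : s ≠ v) : s ≠ t := by
  rintro rfl
  rcases h s hs ht with rfl | rfl <;> contradiction

/-- A `u`–`v` vertex-cut meets the paths in distinct inner vertices, and `P₂`, `P₃` avoid the edge
`uv`; but a colouring with two colours has cuts of at most one vertex in `G - uv` and at most two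
in `G`. -/
theorem IsRVDColoring.false_of_three_paths [Finite V] {c : V → Fin 2} (hc : G.IsRVDColoring c)
    (P₁ P₂ P₃ : G.Walk u v) (hP₂ : P₂.IsPath) (hP₃ : P₃.IsPath)
    (h₂ : 2 ≤ P₂.length) (h₃ : 2 ≤ P₃.length) (h₁₂ : P₁.IsInternallyDisjoint P₂)
    (h₁₃ : P₁.IsInternallyDisjoint P₃) (h₂₃ : P₂.IsInternallyDisjoint P₃) : False := by
  have huv : u ≠ v := by
    rintro rfl
    have := Walk.length_eq_zero_iff.2 (Walk.isPath_iff_nil.1 hP₂)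
    omega
  by_cases hadj : G.Adj u v
  · obtain ⟨S, hu, hv, hS, hsep⟩ := hc.exists_cut_of_adj hadj
    have hedge : ∀ P : G.Walk u v, P.IsPath → 2 ≤ P.length → ∀ e ∈ P.edges, e ∉ {s(u, v)} :=
      fun P hP h2 e he he' => by
        rw [Set.mem_singleton_iff] at he'
        have := hP.length_eq_one_of_mem_edges (he' ▸ he)
        omega
    obtain ⟨s, hs, hsS⟩ :=
      (P₂.toDeleteEdges _ (hedge P₂ hP₂ h₂)).exists_mem_support_mem_of_not_reachable hsep
    obtain ⟨t, ht, htS⟩ :=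
      (P₃.toDeleteEdges _ (hedge P₃ hP₃ h₃)).exists_mem_support_mem_of_not_reachable hsep
    rw [Walk.support_transfer] at hs ht
    exact h₂₃.ne hs ht (ne_of_mem_of_not_mem hsS hu) (ne_of_mem_of_not_mem hsS hv)
      (((Set.ncard_le_one (Set.toFinite S)).1 (by omega)) s hsS t htS)
  · obtain ⟨S, hu, hv, hS, hsep⟩ := hc.exists_cut_of_not_adj huv hadj
    obtain ⟨s₁, hs₁, hs₁S⟩ := P₁.exists_mem_support_mem_of_not_reachable hsep
    obtain ⟨s₂, hs₂, hs₂S⟩ := P₂.exists_mem_support_mem_of_not_reachable hsep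
    obtain ⟨s₃, hs₃, hs₃S⟩ := P₃.exists_mem_support_mem_of_not_reachable hsep
    have hne : ∀ s ∈ S, s ≠ u ∧ s ≠ v := fun s hs =>
      ⟨ne_of_mem_of_not_mem hs hu, ne_of_mem_of_not_mem hs hv⟩
    have h3 : ({s₁, s₂, s₃} : Set V).ncard = 3 := Set.ncard_eq_three.2
      ⟨s₁, s₂, s₃, h₁₂.ne hs₁ hs₂ (hne _ hs₁S).1 (hne _ hs₁S).2,
        h₁₃.ne hs₁ hs₃ (hne _ hs₁S).1 (hne _ hs₁S).2,
        h₂₃.ne hs₂ hs₃ (hne _ hs₂S).1 (hne _ hs₂S).2, rfl⟩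
    have := Set.ncard_le_ncard (s := {s₁, s₂, s₃}) (t := S) (by
      simp [Set.insert_subset_iff, hs₁S, hs₂S, hs₃S])
    omega

lemma Walk.IsCycle.exists_isPath_isPath {C : G.Walk x x} (hC : C.IsCycle) (hy : y ∈ C.support)
    (hyx : y ≠ x) :
    ∃ T D : G.Walk x y, T.IsPath ∧ D.IsPath ∧ T.IsInternallyDisjoint D ∧
      T.length + D.length = C.length ∧ T.edges ⊆ C.edges ∧ D.edges ⊆ C.edges ∧
      T.support ⊆ C.support ∧ D.support ⊆ C.support := by
  classical
  have hspec := C.take_spec hy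
  set T := C.takeUntil y hy
  set D := C.dropUntil y hy
  have hDpath : D.IsPath :=
    Walk.IsCycle.isPath_of_append_right (Walk.not_nil_of_ne hyx.symm) (hspec ▸ hC)
  refine ⟨T, D.reverse, hC.isPath_takeUntil hy, hDpath.reverse, ?_, ?_,
    C.edges_takeUntil_subset_edges hy, ?_, C.support_takeUntil_subset_support hy, ?_⟩
  · have hnodup := hC.support_nodup
    rw [← hspec, Walk.tail_support_append, List.nodup_append] at hnodup
    intro t htT htD
    rw [Walk.support_reverse, List.mem_reverse] at htD
    rw [← T.cons_tail_support, List.mem_cons] at htT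
    rw [← D.cons_tail_support, List.mem_cons] at htD
    rcases htT with rfl | htT
    · exact Or.inl rfl
    rcases htD with rfl | htD
    · exact Or.inr rfl
    exact absurd rfl (hnodup.2.2 t htT t htD)
  · rw [Walk.length_reverse, ← Walk.length_append, hspec]
  · rw [Walk.edges_reverse]
    exact fun e he => C.edges_dropUntil_subset_edges hy (List.mem_reverse.1 he)
  · rw [Walk.support_reverse]
    exact fun t ht => C.support_dropUntil_subset_support hy (List.mem_reverse.1 ht)

/-- The ear `R` and the two arcs of `C` between `x` and `y` are three internally disjoint paths. -/
lemma IsRVDColoring.false_of_ear [Finite V] {c : V → Fin 2} (hc : G.IsRVDColoring c)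
    {C : G.Walk x x} (hC : C.IsCycle) (hy : y ∈ C.support) (hyx : y ≠ x) {R : G.Walk x y}
    (hR : R.IsPath) (hRC : ∀ t ∈ R.support, t ∈ C.support → t = x ∨ t = y)
    (hlen : 2 ≤ R.length ∨ s(x, y) ∉ C.edges) : False := by
  obtain ⟨T, D, hT, hD, hTD, hTDC, hTe, hDe, hTs, hDs⟩ := hC.exists_isPath_isPath hy hyx
  have hRT : R.IsInternallyDisjoint T := fun t hR hT => hRC t hR (hTs hT)
  have hRD : R.IsInternallyDisjoint D := fun t hR hD => hRC t hR (hDs hD)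
  have harc : ∀ A : G.Walk x y, A.edges ⊆ C.edges → s(x, y) ∉ C.edges → 2 ≤ A.length := by
    intro A hA hxy
    match A, hyx with
    | .cons h .nil, _ => exact absurd (hA (by simp)) hxy
    | .cons _ (.cons _ _), _ => simp
  have := hC.three_le_length
  rcases hlen with hR2 | hxy
  · rcases le_or_gt 2 T.length with hT2 | hT2
    · exact hc.false_of_three_paths D T R hT hR hT2 hR2 hTD.symm hRD.symm hRT.symm
    · exact hc.false_of_three_paths T D R hD hR (by omega) hR2 hTD hRT.symm hRD.symm
  · exact hc.false_of_three_paths R T D hT hD (harc T hTe hxy) (harc D hDe hxy) hRT hRD hTD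

lemma IsRVDColoring.mem_edges_of_isCycle [Finite V] {c : V → Fin 2} (hc : G.IsRVDColoring c)
    {C : G.Walk x x} (hC : C.IsCycle) {q : V} (hxq : G.Adj x q) (hy : y ∈ C.support)
    (P : G.Walk q y) (hxP : x ∉ P.support) : s(x, q) ∈ C.edges := by
  classical
  by_contra hxq'
  by_cases hq : q ∈ C.support
  · refine hc.false_of_ear hC hq hxq.ne' (Walk.IsPath.of_adj hxq) ?_ (Or.inr hxq')
    simp
  -- follow `P` up to its first vertex `z` on the cycle
  obtain ⟨z, hzC, hzP, hfirst⟩ :=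
    P.exists_mem_support_forall_mem_support_imp_eq C.support.toFinset ⟨y, by simp [hy]⟩
  rw [List.mem_toFinset] at hzC
  set R := (P.takeUntil z hzP).bypass
  have hRP : R.support ⊆ P.support := fun t ht =>
    P.support_takeUntil_subset_support hzP (Walk.support_bypass_subset_support _ ht)
  have hRC : ∀ t ∈ R.support, t ∈ C.support → t = z := fun t ht htC =>
    hfirst t (List.mem_toFinset.2 htC) (Walk.support_bypass_subset_support _ ht)
  have hzx : z ≠ x := fun h => hxP (h ▸ hzP)
  have hqz : q ≠ z := fun h => hq (h ▸ hzC)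
  refine hc.false_of_ear hC hzC hzx (R := .cons hxq R)
    ((Walk.bypass_isPath _).cons fun h => hxP (hRP h)) ?_ (Or.inl ?_)
  · intro t ht htC
    rw [Walk.support_cons, List.mem_cons] at ht
    exact ht.imp id (hRC t · htC)
  · have : R.length ≠ 0 := fun h => hqz (Walk.eq_of_length_eq_zero h)
    rw [Walk.length_cons]
    omega

/-- The vertex set of the component of `G[K]` containing `z` (empty if `z ∉ K`). -/
def componentIn (G : SimpleGraph V) (K : Set V) (z : V) : Set V :=
  {v | ∃ p : G.Walk z v, ∀ t ∈ p.support, t ∈ K}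

section componentIn

variable {K : Set V} {z : V}

lemma componentIn_subset : G.componentIn K z ⊆ K := fun _ ⟨p, hp⟩ => hp _ p.end_mem_support

lemma self_mem_componentIn (hz : z ∈ K) : z ∈ G.componentIn K z := ⟨.nil, by simpa using hz⟩

lemma mem_componentIn_symm (hv : v ∈ G.componentIn K z) : z ∈ G.componentIn K v := by
  obtain ⟨p, hp⟩ := hv
  exact ⟨p.reverse, by simpa using hp⟩

lemma mem_componentIn_trans (hv : v ∈ G.componentIn K z) (hw : w ∈ G.componentIn K v) :
    w ∈ G.componentIn K z := by
  obtain ⟨p, hp⟩ := hv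
  obtain ⟨q, hq⟩ := hw
  exact ⟨p.append q, fun t ht => ((Walk.mem_support_append_iff _ _).1 ht).elim (hp t) (hq t)⟩

lemma mem_componentIn_of_adj (hv : v ∈ G.componentIn K z) (h : G.Adj v w) (hw : w ∈ K) :
    w ∈ G.componentIn K z :=
  mem_componentIn_trans hv ⟨h.toWalk, by simp [componentIn_subset hv, hw]⟩

lemma Walk.mem_componentIn (p : G.Walk z v) (hp : ∀ t ∈ p.support, t ∈ K) {t : V}
    (ht : t ∈ p.support) : t ∈ G.componentIn K z := by
  classical
  exact ⟨p.takeUntil t ht, fun s hs => hp s (p.support_takeUntil_subset_support ht hs)⟩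

end componentIn

def PreconnectedOn (G : SimpleGraph V) (U : Set V) : Prop :=
  ∀ x ∈ U, U ⊆ G.componentIn U x

lemma preconnectedOn_of_subset_componentIn {U : Set V} {z : V}
    (h : U ⊆ G.componentIn U z) : G.PreconnectedOn U :=
  fun _ hx _ hy => mem_componentIn_trans (mem_componentIn_symm (h hx)) (h hy)

/-- A minimal branch plays the role of an end block of `G`. -/
structure IsBranchAt (G : SimpleGraph V) (U : Set V) (r : V) : Prop where
  root_mem : r ∈ U
  nontrivial : U.Nontrivial
  preconnectedOn : G.PreconnectedOn U
  neighborSet_subset : ∀ u ∈ U, u ≠ r → G.neighborSet u ⊆ U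
  two_le_ncard_neighborSet : ∀ u ∈ U, u ≠ r → 2 ≤ (G.neighborSet u).ncard

lemma IsBranchAt.exists_ssubset {U : Set V} {r c : V} (hU : G.IsBranchAt U r) (hc : c ∈ U)
    (hcut : ¬ G.PreconnectedOn (U \ {c})) : ∃ U' ⊂ U, G.IsBranchAt U' c := by
  set K := U \ {c}
  obtain ⟨x, hx, y, hy, hxy⟩ : ∃ x ∈ K, ∃ y ∈ K, y ∉ G.componentIn K x := by
    simpa [PreconnectedOn, Set.not_subset] using hcut
  -- the new branch is the component of `G[U \ {c}]` containing `z` but not `r`, together with `c`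
  obtain ⟨z, hz, w, hw, hwz, hrz⟩ :
      ∃ z ∈ K, ∃ w ∈ K, w ∉ G.componentIn K z ∧ r ∉ G.componentIn K z := by
    by_cases hrx : r ∈ G.componentIn K x
    · exact ⟨y, hy, x, hx, fun h => hxy (mem_componentIn_symm h),
        fun h => hxy (mem_componentIn_trans hrx (mem_componentIn_symm h))⟩
    · exact ⟨x, hx, y, hy, hxy, hrx⟩
  have hzD : z ∈ G.componentIn K z := self_mem_componentIn hz
  have hDK : G.componentIn K z ⊆ K := componentIn_subset
  obtain ⟨d, hd, hdc⟩ : ∃ d ∈ G.componentIn K z, G.Adj d c := by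
    obtain ⟨p, hp⟩ := hU.preconnectedOn z hz.1 hw.1
    obtain ⟨⟨⟨d, e⟩, hde⟩, hmem, hd, he⟩ := p.exists_boundary_dart _ hzD hwz
    obtain rfl : e = c := by
      by_contra hec
      have heU := hp _ (p.dart_snd_mem_support_of_mem_darts hmem)
      exact he (mem_componentIn_of_adj hd hde ⟨heU, hec⟩)
    exact ⟨d, hd, hde⟩
  have hDr : ∀ v ∈ G.componentIn K z, v ≠ r := fun v hv h => hrz (h ▸ hv)
  refine ⟨insert c (G.componentIn K z), ⟨Set.insert_subset hc fun v hv => (hDK hv).1,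
    fun h => (h hw.1).elim hw.2 hwz⟩, ⟨Set.mem_insert _ _, ?_, ?_, ?_, ?_⟩⟩
  · exact ⟨z, Set.mem_insert_of_mem _ hzD, c, Set.mem_insert _ _, hz.2⟩
  · have hD : ∀ v ∈ G.componentIn K z, v ∈ G.componentIn (insert c (G.componentIn K z)) z :=
      fun v ⟨p, hp⟩ => ⟨p, fun t ht => Set.mem_insert_of_mem _ (p.mem_componentIn hp ht)⟩
    refine preconnectedOn_of_subset_componentIn (Set.insert_subset ?_ hD)
    exact mem_componentIn_of_adj (hD d hd) hdc (Set.mem_insert _ _)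
  · rintro u (rfl | hu) huc t ht
    · exact absurd rfl huc
    by_cases htc : t = c
    · exact Or.inl htc
    exact Or.inr (mem_componentIn_of_adj hu ht
      ⟨hU.neighborSet_subset u (hDK hu).1 (hDr u hu) ht, htc⟩)
  · rintro u (rfl | hu) huc
    · exact absurd rfl huc
    exact hU.two_le_ncard_neighborSet u (hDK hu).1 (hDr u hu)

lemma IsBranchAt.exists_isBranchAt_preconnectedOn_diff [Finite V] {U : Set V} {r : V}
    (hU : G.IsBranchAt U r) :
    ∃ U r, G.IsBranchAt U r ∧ ∀ c ∈ U, G.PreconnectedOn (U \ {c}) := by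
  induction U using WellFoundedLT.induction generalizing r with
  | _ U ih =>
    by_cases h : ∀ c ∈ U, G.PreconnectedOn (U \ {c})
    · exact ⟨U, r, hU, h⟩
    obtain ⟨c, hc, hcut⟩ := not_forall₂.1 h
    obtain ⟨U', hU'U, hU'⟩ := hU.exists_ssubset hc hcut
    exact ih U' hU'U hU'

lemma IsBranchAt.exists_isCycle {U : Set V} {r : V} (hU : G.IsBranchAt U r)
    (h2conn : ∀ c ∈ U, G.PreconnectedOn (U \ {c})) :
    ∃ C : G.Walk r r, C.IsCycle ∧ ∀ t ∈ C.support, t ∈ U := by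
  classical
  obtain ⟨u, huU, hur⟩ := hU.nontrivial.exists_ne r
  obtain ⟨p, hp⟩ := hU.preconnectedOn r hU.root_mem huU
  have hrq : G.Adj r p.snd := p.adj_snd (Walk.not_nil_of_ne hur.symm)
  have hqU : p.snd ∈ U := hp _ (p.getVert_mem_support 1)
  have hqr : p.snd ≠ r := hrq.ne'
  obtain ⟨z, hz, hzr⟩ := Set.exists_ne_of_one_lt_ncard (hU.two_le_ncard_neighborSet _ hqU hqr) r
  rw [mem_neighborSet] at hz
  obtain ⟨W, hW⟩ := h2conn _ hqU z ⟨hU.neighborSet_subset _ hqU hqr hz, (G.ne_of_adj hz).symm⟩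
    (show r ∈ U \ {p.snd} from ⟨hU.root_mem, hqr.symm⟩)
  have hB : ∀ t ∈ W.bypass.support, t ∈ U \ {p.snd} := fun t ht =>
    hW t (W.support_bypass_subset_support ht)
  have hpath : (Walk.cons hz W.bypass).IsPath := W.bypass_isPath.cons fun h => (hB _ h).2 rfl
  refine ⟨.cons hrq (.cons hz W.bypass), ?_, ?_⟩
  · refine (Walk.cons_isCycle_iff _ _).2 ⟨hpath, fun h => ?_⟩
    have h1 := hpath.length_eq_one_of_mem_edges (Sym2.eq_swap ▸ h)
    have h0 : W.bypass.length ≠ 0 := fun h => hzr (Walk.eq_of_length_eq_zero h)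
    rw [Walk.length_cons] at h1
    omega
  · intro t ht
    simp only [Walk.support_cons, List.mem_cons] at ht
    rcases ht with h | h | h
    exacts [h ▸ hU.root_mem, h ▸ hqU, (hB t h).1]

lemma IsBranchAt.neighborSet_subset_of_isCycle [Finite V] {c : V → Fin 2}
    (hc : G.IsRVDColoring c) {U : Set V} {r : V} (hU : G.IsBranchAt U r)
    (h2conn : ∀ c ∈ U, G.PreconnectedOn (U \ {c})) {C : G.Walk r r} (hC : C.IsCycle)
    (hCU : ∀ t ∈ C.support, t ∈ U) {i : ℕ} (hi : i ≠ 0) (hi' : i < C.length) :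
    G.neighborSet (C.getVert i) ⊆ {C.getVert (i - 1), C.getVert (i + 1)} := by
  classical
  intro q hq
  have hx := C.getVert_mem_support i
  have hxr : C.getVert i ≠ r := fun h => by
    rcases (hC.getVert_endpoint_iff hi'.le).1 h with h | h <;> omega
  have hxU := hCU _ hx
  obtain ⟨P, hP⟩ := h2conn _ hxU q ⟨hU.neighborSet_subset _ hxU hxr hq, (G.ne_of_adj hq).symm⟩
    (show r ∈ U \ {C.getVert i} from ⟨hU.root_mem, hxr.symm⟩)
  have hr : r ∈ (C.rotate _ hx).support := List.mem_of_mem_tail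
    ((C.support_rotate _ hx).mem_iff.2 (Walk.end_mem_tail_support hC.not_nil))
  have := hc.mem_edges_of_isCycle (hC.rotate hx) hq hr P fun h => (hP _ h).2 rfl
  rw [(C.rotate_edges _ hx).mem_iff, ← Walk.adj_toSubgraph_iff_mem_edges] at this
  rw [← hC.neighborSet_toSubgraph_internal hi hi']
  exact this

lemma hasSparseNonEdge_or_hasSparseEdge_of_isCycle {r : V} {C : G.Walk r r} (hC : C.IsCycle)
    (hN : ∀ i, i ≠ 0 → i < C.length →
      G.neighborSet (C.getVert i) ⊆ {C.getVert (i - 1), C.getVert (i + 1)}) :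
    G.HasSparseNonEdge ∨ G.HasSparseEdge := by
  have hℓ := hC.three_le_length
  set v := C.getVert
  have hne : ∀ i j, i ≠ j ∧ 1 ≤ i ∧ i ≤ C.length ∧ 1 ≤ j ∧ j ≤ C.length → v i ≠ v j :=
    fun i j h hij => h.1 (hC.getVert_injOn ⟨h.2.1, h.2.2.1⟩ ⟨h.2.2.2.1, h.2.2.2.2⟩ hij)
  have h0 : v 0 = v C.length := by simp [v]
  have h1 : G.neighborSet (v 1) ⊆ {v 0, v 2} := hN 1 (by omega) (by omega)
  have h2 : G.neighborSet (v 2) ⊆ {v 1, v 3} := hN 2 (by omega) (by omega)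
  rcases (by omega : C.length = 3 ∨ C.length = 4 ∨ 5 ≤ C.length) with hℓ3 | hℓ4 | hℓ5
  · -- a triangle `r x y`
    exact Or.inr ⟨_, _, _, _, C.adj_getVert_succ (i := 1) (by omega), Set.pair_comm _ _ ▸ h1, h2,
      Or.inl (hℓ3 ▸ h0)⟩
  · -- a square `r x z y`
    have h3 : G.neighborSet (v 3) ⊆ {v 2, v 4} := hN 3 (by omega) (by omega)
    rw [← hℓ4, ← h0] at h3
    refine Or.inl ⟨v 1, v 3, hne 1 3 (by omega), fun h => ?_, ?_⟩
    · rcases h1 h with h | h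
      exacts [hne 3 C.length (by omega) (h.trans h0), hne 3 2 (by omega) h]
    · calc _ ≤ ({v 0, v 2} : Set V).ncard := Set.ncard_le_ncard fun t ht =>
            ht.1.elim (h1 ·) (Set.pair_comm _ _ ▸ h3 ·)
        _ ≤ 2 := (Set.ncard_insert_le _ _).trans (by simp)
  · -- a path `w x y z` of vertices of degree two in `G`
    have h3 : G.neighborSet (v 3) ⊆ {v 2, v 4} := hN 3 (by omega) (by omega)
    refine Or.inr ⟨_, _, _, _, C.adj_getVert_succ (i := 2) (by omega), Set.pair_comm _ _ ▸ h2, h3,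
      Or.inr fun h => ?_⟩
    rcases h1 h with h | h
    exacts [hne 4 C.length (by omega) (h.trans h0), hne 4 2 (by omega) h]

lemma hasSparseNonEdge_or_hasSparseEdge_or_exists_two_le_ncard [Finite V] [Nonempty V] :
    G.HasSparseNonEdge ∨ G.HasSparseEdge ∨ ∃ r, ∀ u ≠ r, 2 ≤ (G.neighborSet u).ncard := by
  by_cases h : ∃ u w, u ≠ w ∧ (G.neighborSet u).ncard ≤ 1 ∧ (G.neighborSet w).ncard ≤ 1
  · obtain ⟨u, w, huw, hu, hw⟩ := h
    by_cases hadj : G.Adj u w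
    · have hN : ∀ {a b}, G.Adj a b → (G.neighborSet a).ncard ≤ 1 → G.neighborSet a ⊆ {b, u} :=
        fun hab ha t ht => Or.inl ((Set.ncard_le_one (Set.toFinite _)).1 ha t ht _ hab)
      exact Or.inr (Or.inl ⟨u, w, u, u, hadj, hN hadj hu, hN hadj.symm hw, Or.inl rfl⟩)
    · refine Or.inl ⟨u, w, huw, hadj, ?_⟩
      have := Set.ncard_le_ncard (Set.sdiff_subset (s := G.neighborSet u ∪ G.neighborSet w)
        (t := {u, w}))
      have := Set.ncard_union_le (G.neighborSet u) (G.neighborSet w)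
      omega
  · refine Or.inr (Or.inr ?_)
    by_cases h' : ∃ r, (G.neighborSet r).ncard ≤ 1
    · obtain ⟨r, hr⟩ := h'
      exact ⟨r, fun u hu => by by_contra! h''; exact h ⟨r, u, hu.symm, hr, by omega⟩⟩
    · exact ⟨Classical.arbitrary V, fun u _ => by by_contra! h''; exact h' ⟨u, by omega⟩⟩

theorem IsRVDColoring.hasSparseNonEdge_or_hasSparseEdge [Finite V] [Nontrivial V]
    (hG : G.Connected) {c : V → Fin 2} (hc : G.IsRVDColoring c) :
    G.HasSparseNonEdge ∨ G.HasSparseEdge := by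
  obtain h | h | ⟨r, hr⟩ := G.hasSparseNonEdge_or_hasSparseEdge_or_exists_two_le_ncard
  · exact Or.inl h
  · exact Or.inr h
  have hbranch : G.IsBranchAt Set.univ r :=
    ⟨trivial, Set.nontrivial_univ,
      fun x _ y _ => ⟨(hG.preconnected x y).some, fun _ _ => trivial⟩,
      fun _ _ _ => Set.subset_univ _, fun u _ hu => hr u hu⟩
  obtain ⟨U, r, hU, h2conn⟩ := hbranch.exists_isBranchAt_preconnectedOn_diff
  obtain ⟨C, hC, hCU⟩ := hU.exists_isCycle h2conn
  exact hasSparseNonEdge_or_hasSparseEdge_of_isCycle hC fun i hi hi' =>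
    hU.neighborSet_subset_of_isCycle hc h2conn hC hCU hi hi'

end SimpleGraph

theorem rvd_compl_ge_of_rvd_eq_two_general {V : Type*} [Fintype V] (G : SimpleGraph V)
    (hG : G.Connected) (h2 : G.rvd = 2) :
    Fintype.card V - 3 ≤ Gᶜ.rvd := by
  rcases le_or_gt (Fintype.card V) 3 with hn | hn
  · omega
  have : Nontrivial V := Fintype.one_lt_card_iff_nontrivial.1 (by omega)
  obtain ⟨c, hc⟩ : ∃ c : V → Fin 2, G.IsRVDColoring c := h2 ▸ G.exists_isRVDColoring_rvd
  obtain ⟨c', hc'⟩ := Gᶜ.exists_isRVDColoring_rvd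
  have := (hc.hasSparseNonEdge_or_hasSparseEdge hG).elim (·.card_le hc') (·.card_le hc')
  omega

/-- If `G` is a connected graph of order `n` with `rvd(G) = 2` and the
complement `Ḡ` is connected, then `rvd(Ḡ) ≥ n - 3`. -/
theorem rvd_compl_ge_of_rvd_eq_two {V : Type*} [Fintype V] (G : SimpleGraph V)
    (hG : G.Connected) (hGc : Gᶜ.Connected) (h2 : G.rvd = 2) :
    Fintype.card V - 3 ≤ Gᶜ.rvd :=
  rvd_compl_ge_of_rvd_eq_two_general G hG h2
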